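/- Let r ≥ 1 and let G be a finite simple graph containing 4r pairwise vertex-disjoint triangles T_1, …, T_{4r} such that for each i: every vertex x of T_i has exactly one neighbour outside T_i, this outside neighbour has degree exactly 2 in G, and the three outside neighbours of the three vertices of T_i are pairwise distinct. Then G contains r pairwise vertex-disjoint subgraphs, each isomorphic to the net N_{1,1,1}. -/

import Mathlib

/-- The net `N_{1,1,1}`: a triangle on vertices `0, 1, 2` together with the
pendant edges `0-3`, `1-4`, `2-5`. -/
def Net : SimpleGraph (Fin 6) :=
  SimpleGraph.fromRel (fun a b =>
    (a = 0 ∧ b = 1) ∨ (a = 0 ∧ b = 2) ∨ (a = 1 ∧ b = 2) ∨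
    (a = 0 ∧ b = 3) ∨ (a = 1 ∧ b = 4) ∨ (a = 2 ∧ b = 5))

/-!
An outside neighbour has degree two, so it lies on no triangle and is adjacent to vertices of
at most two triangles. Hence in the intersection graph of the sets of outside neighbours every
triangle has degree at most three, and the greedy algorithm finds `r` pairwise non-adjacent
ones among the `4r` triangles. Each chosen triangle together with its outside neighbours spans
a net, and non-adjacency makes these nets vertex-disjoint.
-/

open Set Function

theorem Fin.range_append {α : Type*} {m n : ℕ} (xs : Fin m → α) (ys : Fin n → α) :
    range (Fin.append xs ys) = range xs ∪ range ys := by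
  ext x
  constructor
  · rintro ⟨i, rfl⟩
    cases i using Fin.addCases <;> simp
  · rintro (⟨i, rfl⟩ | ⟨i, rfl⟩)
    exacts [⟨Fin.castAdd n i, Fin.append_left xs ys i⟩,
      ⟨Fin.natAdd m i, Fin.append_right xs ys i⟩]

namespace SimpleGraph

variable {V ι : Type*} {G : SimpleGraph V}

theorem three_le_ncard_neighborSet [Finite V] {v x y z : V} (hx : G.Adj v x) (hy : G.Adj v y)
    (hz : G.Adj v z) (hxy : x ≠ y) (hxz : x ≠ z) (hyz : y ≠ z) :
    3 ≤ (G.neighborSet v).ncard := by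
  have hsub : ({x, y, z} : Set V) ⊆ G.neighborSet v := by
    simp only [insert_subset_iff, singleton_subset_iff, mem_neighborSet]
    exact ⟨hx, hy, hz⟩
  rw [← ncard_eq_three.mpr ⟨x, y, z, hxy, hxz, hyz, rfl⟩]
  exact ncard_le_ncard hsub

theorem notMem_range_of_adj_of_ncard_neighborSet_eq_two [Finite V] {t : Fin 3 → V}
    (ht : Injective t) (htri : ∀ a b, a ≠ b → G.Adj (t a) (t b)) {v u : V}
    (hv : (G.neighborSet v).ncard = 2) (hvu : G.Adj v u) (hu : u ∉ range t) : v ∉ range t := by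
  rintro ⟨b, rfl⟩
  have hne : ∀ a, t a ≠ u := fun a h => hu ⟨a, h⟩
  have := three_le_ncard_neighborSet (htri b (b + 1) (by fin_cases b <;> decide))
    (htri b (b + 2) (by fin_cases b <;> decide)) hvu
    (ht.ne (by fin_cases b <;> decide)) (hne _) (hne _)
  omega

theorem eq_or_eq_or_eq_of_ncard_neighborSet_eq_two [Finite V] {T : ι → Fin 3 → V}
    (hTdisj : ∀ i j, i ≠ j → Disjoint (range (T i)) (range (T j))) {v : V}
    (hv : (G.neighborSet v).ncard = 2) {i j k : ι} {a b c : Fin 3} (ha : G.Adj v (T i a))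
    (hb : G.Adj v (T j b)) (hc : G.Adj v (T k c)) : i = j ∨ i = k ∨ j = k := by
  by_contra! h
  have hT : ∀ {i j} (a b), i ≠ j → T i a ≠ T j b := fun a b hij =>
    (hTdisj _ _ hij).ne_of_mem (mem_range_self a) (mem_range_self b)
  have := three_le_ncard_neighborSet ha hb hc (hT a b h.1) (hT a c h.2.1) (hT b c h.2.2)
  omega

def intersectionGraph (S : ι → Set V) : SimpleGraph ι where
  Adj i j := i ≠ j ∧ ¬Disjoint (S i) (S j)
  symm := ⟨fun _ _ h => ⟨h.1.symm, fun hd => h.2 hd.symm⟩⟩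
  loopless := ⟨fun _ h => h.1 rfl⟩

theorem ncard_neighborSet_intersectionGraph_le {S : ι → Set V}
    (hS : ∀ x i j k, x ∈ S i → x ∈ S j → x ∈ S k → i = j ∨ i = k ∨ j = k) {i : ι}
    (hfin : (S i).Finite) : ((intersectionGraph S).neighborSet i).ncard ≤ (S i).ncard := by
  have hother : ∀ x, ∃ j, ∀ k, k ≠ i → x ∈ S i → x ∈ S k → k = j := by
    intro x
    by_cases h : ∃ j ≠ i, x ∈ S i ∧ x ∈ S j
    · obtain ⟨j, hji, hxi, hxj⟩ := h
      refine ⟨j, fun k hki _ hxk => ?_⟩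
      rcases hS x i j k hxi hxj hxk with h | h | h
      exacts [(hji h.symm).elim, (hki h.symm).elim, h.symm]
    · push Not at h
      exact ⟨i, fun k hki hxi hxk => (h k hki hxi hxk).elim⟩
  choose g hg using hother
  have hsub : (intersectionGraph S).neighborSet i ⊆ g '' S i := by
    rintro j ⟨hij, hnd⟩
    obtain ⟨x, hxi, hxj⟩ := not_disjoint_iff.mp hnd
    exact ⟨x, hxi, (hg x j (Ne.symm hij) hxi hxj).symm⟩
  exact (ncard_le_ncard hsub (hfin.image g)).trans (ncard_image_le hfin)

theorem exists_isIndepSet_card_eq [Finite V] {d : ℕ} (hd : ∀ v, (G.neighborSet v).ncard ≤ d)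
    (k : ℕ) (s : Finset V) (hs : (d + 1) * k ≤ s.card) :
    ∃ t ⊆ s, t.card = k ∧ G.IsIndepSet (t : Set V) := by
  classical
  induction k generalizing s with
  | zero => exact ⟨∅, Finset.empty_subset s, rfl, by simp⟩
  | succ k ih =>
    obtain ⟨x, hx⟩ : s.Nonempty := Finset.card_pos.mp (by nlinarith)
    set s' := s.filter fun y => y ≠ x ∧ ¬G.Adj x y
    have hclose : (s.filter fun y => ¬(y ≠ x ∧ ¬G.Adj x y)).card ≤ d + 1 := by
      rw [← ncard_coe_finset]
      calc _ ≤ (insert x (G.neighborSet x)).ncard := by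
              refine ncard_le_ncard (fun y hy => ?_)
              simp only [Finset.coe_filter, mem_ofPred_eq, not_and, not_not] at hy
              by_cases hyx : y = x
              exacts [Or.inl hyx, Or.inr (hy.2 hyx)]
        _ ≤ (G.neighborSet x).ncard + 1 := ncard_insert_le _ _
        _ ≤ d + 1 := by have := hd x; omega
    have hs' : (d + 1) * k ≤ s'.card := by
      have := Finset.card_filter_add_card_filter_not (s := s)
        (fun y => y ≠ x ∧ ¬G.Adj x y)
      nlinarith
    obtain ⟨t, hts', htk, ht⟩ := ih s' hs'
    have hxt : ∀ y ∈ t, y ≠ x ∧ ¬G.Adj x y := fun y hy => (Finset.mem_filter.mp (hts' hy)).2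
    refine ⟨insert x t, Finset.insert_subset hx (hts'.trans (Finset.filter_subset _ _)), ?_, ?_⟩
    · rw [Finset.card_insert_of_notMem fun h => (hxt x h).1 rfl, htk]
    · rw [Finset.coe_insert]
      exact ht.insert fun y hy _ => ⟨(hxt y hy).2, fun h => (hxt y hy).2 h.symm⟩

end SimpleGraph

open SimpleGraph

theorem adj_append_of_net_adj {V : Type*} {G : SimpleGraph V} {t p : Fin 3 → V}
    (htri : ∀ a b, a ≠ b → G.Adj (t a) (t b)) (hp : ∀ a, G.Adj (t a) (p a)) {a b : Fin 6}
    (hab : Net.Adj a b) : G.Adj (Fin.append t p a) (Fin.append t p b) := by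
  obtain ⟨-, h | h⟩ := (SimpleGraph.fromRel_adj _ _ _).mp hab <;>
    obtain ⟨rfl, rfl⟩ | ⟨rfl, rfl⟩ | ⟨rfl, rfl⟩ | ⟨rfl, rfl⟩ | ⟨rfl, rfl⟩ | ⟨rfl, rfl⟩ := h <;>
    first
    | exact htri _ _ (by decide)
    | exact hp _
    | exact (hp _).symm

theorem stmt14_general {V : Type*} [Fintype V] (G : SimpleGraph V) (r : ℕ)
    (T : Fin (4 * r) → Fin 3 → V) (n : Fin (4 * r) → Fin 3 → V)
    (hTinj : ∀ i, Function.Injective (T i))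
    (hTdisj : ∀ i j, i ≠ j → Disjoint (Set.range (T i)) (Set.range (T j)))
    (hTtri : ∀ i, ∀ a b : Fin 3, a ≠ b → G.Adj (T i a) (T i b))
    (hnout : ∀ i a, n i a ∉ Set.range (T i))
    (hnadj : ∀ i a, G.Adj (T i a) (n i a))
    (hndeg : ∀ i a, (G.neighborSet (n i a)).ncard = 2)
    (hninj : ∀ i, Function.Injective (n i)) :
    ∃ f : Fin r → Fin 6 → V,
      (∀ i, Function.Injective (f i) ∧
        ∀ a b : Fin 6, Net.Adj a b → G.Adj (f i a) (f i b)) ∧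
      ∀ i j, i ≠ j → Disjoint (Set.range (f i)) (Set.range (f j)) := by
  have hnT : ∀ i j, Disjoint (range (n i)) (range (T j)) := by
    refine fun i j => disjoint_left.mpr ?_
    rintro _ ⟨a, rfl⟩
    obtain rfl | hij := eq_or_ne i j
    · exact hnout i a
    · exact notMem_range_of_adj_of_ncard_neighborSet_eq_two (hTinj j) (hTtri j) (hndeg i a)
        (hnadj i a).symm (disjoint_left.mp (hTdisj i j hij) (mem_range_self a))
  have hdeg : ∀ i, ((intersectionGraph fun i => range (n i)).neighborSet i).ncard ≤ 3 := by
    intro i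
    refine (ncard_neighborSet_intersectionGraph_le (S := fun i => range (n i)) ?_
      (finite_range (n i))).trans ?_
    · rintro _ i j k ⟨a, rfl⟩ ⟨b, hb⟩ ⟨c, hc⟩
      exact eq_or_eq_or_eq_of_ncard_neighborSet_eq_two hTdisj (hndeg i a) (hnadj i a).symm
        (hb ▸ (hnadj j b).symm) (hc ▸ (hnadj k c).symm)
    · simp [ncard_range_of_injective (hninj i)]
  obtain ⟨t, -, htr, hindep⟩ := exists_isIndepSet_card_eq hdeg r Finset.univ (by simp)
  set σ := t.orderEmbOfFin htr
  refine ⟨fun i => Fin.append (T (σ i)) (n (σ i)),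
    fun i => ⟨?_, fun a b => adj_append_of_net_adj (hTtri _) (hnadj _)⟩, fun i j hij => ?_⟩
  · exact Fin.append_injective_iff.mpr
      ⟨hTinj _, hninj _, fun a b h => (hnT _ _).ne_of_mem ⟨b, rfl⟩ ⟨a, rfl⟩ h.symm⟩
  · have hσ : σ i ≠ σ j := σ.injective.ne hij
    have hnn : Disjoint (range (n (σ i))) (range (n (σ j))) := not_not.mp fun h =>
      hindep (t.orderEmbOfFin_mem htr i) (t.orderEmbOfFin_mem htr j) hσ ⟨hσ, h⟩
    rw [Fin.range_append, Fin.range_append, disjoint_union_left, disjoint_union_right,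
      disjoint_union_right]
    exact ⟨⟨hTdisj _ _ hσ, (hnT _ _).symm⟩, hnT _ _, hnn⟩

/-- Let `G` contain `4r` pairwise vertex-disjoint triangles `T i` such that
every vertex `T i a` of the `i`-th triangle has exactly one neighbour
`n i a` outside the triangle, this outside neighbour has degree exactly `2` in
`G`, and the three outside neighbours of a triangle are pairwise distinct.
Then `G` contains `r` pairwise vertex-disjoint subgraphs, each isomorphic to
the net `N_{1,1,1}`. -/
theorem stmt14 {V : Type*} [Fintype V] (G : SimpleGraph V) (r : ℕ) (hr : 1 ≤ r)
    (T : Fin (4 * r) → Fin 3 → V) (n : Fin (4 * r) → Fin 3 → V)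
    (hTinj : ∀ i, Function.Injective (T i))
    (hTdisj : ∀ i j, i ≠ j → Disjoint (Set.range (T i)) (Set.range (T j)))
    (hTtri : ∀ i, ∀ a b : Fin 3, a ≠ b → G.Adj (T i a) (T i b))
    (hnout : ∀ i a, n i a ∉ Set.range (T i))
    (hnadj : ∀ i a, G.Adj (T i a) (n i a))
    (hnuniq : ∀ i a, ∀ w : V, G.Adj (T i a) w → w ∉ Set.range (T i) → w = n i a)
    (hndeg : ∀ i a, (G.neighborSet (n i a)).ncard = 2)
    (hninj : ∀ i, Function.Injective (n i)) :
    ∃ f : Fin r → Fin 6 → V,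
      (∀ i, Function.Injective (f i) ∧
        ∀ a b : Fin 6, Net.Adj a b → G.Adj (f i a) (f i b)) ∧
      ∀ i j, i ≠ j → Disjoint (Set.range (f i)) (Set.range (f j)) :=
  stmt14_general G r T n hTinj hTdisj hTtri hnout hnadj hndeg hninj
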